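/- Let μ, m, δ, δ̃ ≥ 0, N ≥ 1, and let x₀, x₁, …, x_N ∈ Q, L₁, …, L_N > 0 be such that for each k = 0, …, N−1 there are f_δ(x_k) ∈ ℝ and a convex function ψ_k : E → ℝ with ψ_k(x_k) = 0 that is m-strongly convex relative to d, satisfying: (a) μ·V[x_k](x) ≤ f(x) − f_δ(x_k) − ψ_k(x) for all x ∈ Q; (b) f(x_k) − δ ≤ f_δ(x_k) ≤ f(x_k); (c) x_{k+1} is a δ̃-approximate minimizer of x ↦ ψ_k(x) + L_{k+1}·V[x_k](x) on Q; (d) f_δ(x_{k+1}) ≤ f_δ(x_k) + ψ_k(x_{k+1}) + L_{k+1}·V[x_k](x_{k+1}) + δ, where f_δ(x_N) is also assumed to satisfy f(x_N) − δ ≤ f_δ(x_N) ≤ f(x_N). Let x⋆ ∈ Q be a minimizer of f on Q. Define q_k := (L_k − μ)/(L_k + m) if L_k > μ and q_k := 0 otherwise, Q_j^N := ∏_{i=j}^{N} q_i (with Q_j^N := 1 for j > N), and let y_N := x_{j(N)} where j(N) minimizes f_δ(x_k) over k = 1, …, N. Then f(y_N) − f(x⋆) ≤ min{(L_N + m)·Q_1^N,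 1 / (∑_{i=1}^{N} 1/(L_i + m))}·V[x₀](x⋆) + δ̃ + 3δ. -/

import Mathlib

open RealInnerProductSpace Finset

/-- The Bregman divergence `V[y](x) = d(x) - d(y) - ⟪∇d(y), x - y⟫` generated by `d`
with gradient map `Dd`. -/
noncomputable def breg {E : Type*} [NormedAddCommGroup E] [InnerProductSpace ℝ E]
    (d : E → ℝ) (Dd : E → E) (y x : E) : ℝ :=
  d x - d y - ⟪Dd y, x - y⟫

/-- `g` is a subgradient of `ψ` at `z` (relative to the set `Q`). -/
def IsSubgradOn {E : Type*} [NormedAddCommGroup E] [InnerProductSpace ℝ E]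
    (Q : Set E) (ψ : E → ℝ) (z g : E) : Prop :=
  ∀ x ∈ Q, ψ z + ⟪g, x - z⟫ ≤ ψ x

/-- `ψ` is `m`-strongly convex relative to `d` on `Q`, where `V` is the Bregman
divergence generated by `d`. -/
def StrongRelConvexOn {E : Type*} [NormedAddCommGroup E] [InnerProductSpace ℝ E]
    (Q : Set E) (V : E → E → ℝ) (m : ℝ) (ψ : E → ℝ) : Prop :=
  ∀ z ∈ Q, ∀ g : E, IsSubgradOn Q ψ z g → ∀ x ∈ Q, ψ z + ⟪g, x - z⟫ + m * V z x ≤ ψ x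

/-- `y` is a `δ`-approximate minimizer of `Ψ` on `Q`: there exists a subgradient `h`
of `Ψ` at `y` such that `⟪h, x - y⟫ ≥ -δ` for all `x ∈ Q`. -/
def IsApproxMinOn {E : Type*} [NormedAddCommGroup E] [InnerProductSpace ℝ E]
    (Q : Set E) (Ψ : E → ℝ) (δ : ℝ) (y : E) : Prop :=
  y ∈ Q ∧ ∃ h : E, IsSubgradOn Q Ψ y h ∧ ∀ x ∈ Q, -δ ≤ ⟪h, x - y⟫

/-!
Each iteration is an inexact Bregman proximal step, so the three-point inequality, combined
with the model bound (a) and the line-search test (d), gives with `r_k = V[x_k](x⋆)`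
  `f_δ(x_{k+1}) - f(x⋆) + (L_{k+1} + m) r_{k+1} ≤ q_{k+1} (L_{k+1} + m) r_k + δ̃ + δ`.
Every `f_δ(x_k) - f(x⋆)` dominates the gap `f_δ(y_N) - f(x⋆)`. Either this gap is at most
`δ̃ + δ`, or `r` contracts by `q_k` at each step, which gives the geometric rate; dividing the
recursion by `L_{k+1} + m` and telescoping gives the harmonic rate. Finally
`f(y_N) ≤ f_δ(y_N) + δ`.
-/

open Filter Topology

section Bregman

variable {E : Type*} [NormedAddCommGroup E] [InnerProductSpace ℝ E] {d : E → ℝ} {Dd : E → E}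

theorem breg_three_point (p z u : E) :
    breg d Dd p u = breg d Dd p z + ⟪Dd z - Dd p, u - z⟫ + breg d Dd z u := by
  simp only [breg, inner_sub_left, inner_sub_right]
  ring

variable [CompleteSpace E]

theorem HasGradientAt.tendsto_slope_nhdsGT {φ : E → ℝ} {G z : E} (hφ : HasGradientAt φ G z)
    (v : E) :
    Tendsto (fun t : ℝ => t⁻¹ * (φ (z + t • v) - φ z)) (𝓝[>] 0) (𝓝 ⟪G, v⟫) := by
  simpa using ((hasGradientAt_iff_hasFDerivAt.mp hφ).hasLineDerivAt v).tendsto_slope_zero_right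

/-- Compare both sides along the segment from `z` to `u`, where `ψ` lies below its chord, and
let the step shrink to `0`. -/
theorem IsSubgradOn.sub_of_hasGradientAt {Q : Set E} (hQ : Convex ℝ Q) {ψ φ : E → ℝ}
    (hψ : ConvexOn ℝ Q ψ) {z G h : E} (hz : z ∈ Q) (hφ : HasGradientAt φ G z)
    (hsub : IsSubgradOn Q (fun w => ψ w + φ w) z h) :
    IsSubgradOn Q ψ z (h - G) := by
  intro u hu
  have hslope : ∀ᶠ t in 𝓝[>] (0 : ℝ),
      ⟪h, u - z⟫ - (ψ u - ψ z) ≤ t⁻¹ * (φ (z + t • (u - z)) - φ z) := by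
    filter_upwards [Ioc_mem_nhdsGT (zero_lt_one' ℝ)] with t ⟨ht0, ht1⟩
    have hw := hsub _ (hQ.add_smul_sub_mem hz hu ⟨ht0.le, ht1⟩)
    have hψw : ψ (z + t • (u - z)) ≤ ψ z + t * (ψ u - ψ z) := by
      have := hψ.2 hz hu (sub_nonneg.mpr ht1) ht0.le (sub_add_cancel 1 t)
      rw [show (1 - t) • z + t • u = z + t • (u - z) by module] at this
      simp only [smul_eq_mul] at this
      linarith
    rw [add_sub_cancel_left, real_inner_smul_right] at hw
    rw [le_inv_mul_iff₀ ht0]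
    linarith
  have := ge_of_tendsto (hφ.tendsto_slope_nhdsGT (u - z)) hslope
  rw [inner_sub_left]
  linarith

theorem breg_nonneg (hd_conv : ConvexOn ℝ Set.univ d) (hd_diff : ∀ x, HasGradientAt d (Dd x) x)
    (y x : E) : 0 ≤ breg d Dd y x := by
  have hneg : HasGradientAt (fun w => -d w) (-Dd y) y := by
    rw [hasGradientAt_iff_hasFDerivAt, map_neg]
    exact (hasGradientAt_iff_hasFDerivAt.mp (hd_diff y)).neg
  have hzero : IsSubgradOn Set.univ (fun w => d w + -d w) y 0 := fun w _ => by simp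
  have := hzero.sub_of_hasGradientAt convex_univ hd_conv trivial hneg x trivial
  rw [zero_sub, neg_neg] at this
  unfold breg
  linarith

theorem hasGradientAt_breg {z : E} (hd : HasGradientAt d (Dd z) z) (p : E) :
    HasGradientAt (breg d Dd p) (Dd z - Dd p) z := by
  rw [hasGradientAt_iff_hasFDerivAt] at hd ⊢
  have hlin : HasFDerivAt (fun w => ⟪Dd p, w - p⟫) (InnerProductSpace.toDual ℝ E (Dd p)) z := by
    simpa only [InnerProductSpace.toDual_apply_apply, ← inner_sub_right] using
      ((InnerProductSpace.toDual ℝ E (Dd p)).hasFDerivAt (x := z)).sub_const ⟪Dd p, p⟫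
  rw [map_sub]
  exact (hd.sub_const (d p)).sub hlin

theorem IsApproxMinOn.prox_three_point {Q : Set E} (hQ : Convex ℝ Q)
    (hd_diff : ∀ x, HasGradientAt d (Dd x) x) {ψ : E → ℝ} {m c ε : ℝ} (hψ : ConvexOn ℝ Q ψ)
    (hψm : StrongRelConvexOn Q (breg d Dd) m ψ) {p z : E}
    (hz : IsApproxMinOn Q (fun u => ψ u + c * breg d Dd p u) ε z) {u : E} (hu : u ∈ Q) :
    ψ z + c * breg d Dd p z + (c + m) * breg d Dd z u ≤ ψ u + c * breg d Dd p u + ε := by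
  obtain ⟨hzQ, h, hsub, happrox⟩ := hz
  have hgrad : HasGradientAt (fun w => c * breg d Dd p w) (c • (Dd z - Dd p)) z := by
    rw [hasGradientAt_iff_hasFDerivAt, map_smul]
    exact (hasGradientAt_iff_hasFDerivAt.mp (hasGradientAt_breg (hd_diff z) p)).const_mul c
  have hstrong := hψm z hzQ _ (hsub.sub_of_hasGradientAt hQ hψ hzQ hgrad) u hu
  rw [inner_sub_left, real_inner_smul_left] at hstrong
  have := happrox u hu
  rw [breg_three_point p z u]
  linarith

end Bregman

noncomputable def rateFactor (μ m L : ℝ) : ℝ :=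
  if μ < L then (L - μ) / (L + m) else 0

section RateFactor

variable {μ m : ℝ} (L : ℝ)

theorem rateFactor_nonneg (hμ : 0 ≤ μ) (hm : 0 ≤ m) : 0 ≤ rateFactor μ m L := by
  unfold rateFactor
  split_ifs with h
  · exact div_nonneg (by linarith) (by linarith)
  · rfl

theorem rateFactor_le_one (hμ : 0 ≤ μ) (hm : 0 ≤ m) : rateFactor μ m L ≤ 1 := by
  unfold rateFactor
  split_ifs with h
  · exact div_le_one_of_le₀ (by linarith) (by linarith)
  · exact zero_le_one

theorem sub_mul_le_rateFactor_mul (hμ : 0 ≤ μ) (hm : 0 ≤ m) {r : ℝ} (hr : 0 ≤ r) :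
    (L - μ) * r ≤ rateFactor μ m L * ((L + m) * r) := by
  unfold rateFactor
  split_ifs with h
  · rw [← mul_assoc, div_mul_cancel₀ _ (by linarith)]
  · rw [zero_mul]
    exact mul_nonpos_of_nonpos_of_nonneg (by linarith) hr

end RateFactor

section Recursion

variable {N : ℕ} {a r c q : ℕ → ℝ} {ε A : ℝ}

theorem le_mul_prod_mul_add_of_step (hN : 1 ≤ N) (hr : ∀ k, 0 ≤ r k)
    (hc : ∀ k ∈ Icc 1 N, 0 < c k) (hq : ∀ k, 0 ≤ q k)
    (hstep : ∀ k < N, a (k + 1) + c (k + 1) * r (k + 1) ≤ q (k + 1) * (c (k + 1) * r k) + ε)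
    (hA : ∀ k ∈ Icc 1 N, A ≤ a k) :
    A ≤ c N * (∏ i ∈ Icc 1 N, q i) * r 0 + ε := by
  obtain ⟨n, rfl⟩ : ∃ n, N = n + 1 := ⟨N - 1, by omega⟩
  have hcN := hc (n + 1) (right_mem_Icc.mpr hN)
  by_cases hAε : A ≤ ε
  · have hP : 0 ≤ ∏ i ∈ Icc 1 (n + 1), q i := prod_nonneg fun i _ => hq i
    have := mul_nonneg (mul_nonneg hcN.le hP) (hr 0)
    linarith
  -- once the gap `A - ε` is positive, every step contracts `r` by the factor `q`
  have hdecay : ∀ k < n, r (k + 1) ≤ q (k + 1) * r k := by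
    intro k hk
    have hck := hc (k + 1) (mem_Icc.mpr ⟨by omega, by omega⟩)
    have := hA (k + 1) (mem_Icc.mpr ⟨by omega, by omega⟩)
    have := hstep k (by omega)
    refine le_of_mul_le_mul_left ?_ hck
    linarith
  have hgeom : ∀ k ≤ n, r k ≤ (∏ i ∈ Icc 1 k, q i) * r 0 := by
    intro k
    induction k with
    | zero => simp
    | succ k ih =>
      intro hk
      rw [prod_Icc_succ_top (by omega), mul_comm _ (q _), mul_assoc]
      exact (hdecay k hk).trans (mul_le_mul_of_nonneg_left (ih (by omega)) (hq _))
  have hlast := hstep n n.lt_succ_self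
  have := hA (n + 1) (right_mem_Icc.mpr hN)
  have := mul_le_mul_of_nonneg_left (hgeom n le_rfl) (mul_nonneg (hq (n + 1)) hcN.le)
  have := mul_nonneg hcN.le (hr (n + 1))
  rw [prod_Icc_succ_top (by omega)]
  linarith

theorem le_inv_sum_inv_mul_add_of_step (hN : 1 ≤ N) (hr : ∀ k, 0 ≤ r k)
    (hc : ∀ k ∈ Icc 1 N, 0 < c k) (hq : ∀ k, q k ≤ 1)
    (hstep : ∀ k < N, a (k + 1) + c (k + 1) * r (k + 1) ≤ q (k + 1) * (c (k + 1) * r k) + ε)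
    (hA : ∀ k ∈ Icc 1 N, A ≤ a k) :
    A ≤ (1 / ∑ i ∈ Icc 1 N, 1 / c i) * r 0 + ε := by
  have htelescope : ∀ n ≤ N, ∑ k ∈ Icc 1 n, a k / c k + r n
      ≤ r 0 + ε * ∑ k ∈ Icc 1 n, 1 / c k := by
    intro n
    induction n with
    | zero => simp
    | succ n ih =>
      intro hn
      have hcn := hc (n + 1) (mem_Icc.mpr ⟨by omega, hn⟩)
      have hstep' : a (n + 1) / c (n + 1) + r (n + 1) ≤ r n + ε * (1 / c (n + 1)) := by
        have := mul_le_mul_of_nonneg_right (hq (n + 1)) (mul_nonneg hcn.le (hr n))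
        rw [div_add' _ _ _ hcn.ne', mul_one_div, add_div' _ _ _ hcn.ne',
          div_le_div_iff_of_pos_right hcn]
        linarith [hstep n (by omega)]
      rw [sum_Icc_succ_top (by omega), sum_Icc_succ_top (by omega)]
      linarith [ih (by omega)]
  have hS : 0 < ∑ i ∈ Icc 1 N, 1 / c i :=
    sum_pos (fun i hi => one_div_pos.mpr (hc i hi)) ⟨1, left_mem_Icc.mpr hN⟩
  have hAS : A * ∑ i ∈ Icc 1 N, 1 / c i ≤ ∑ k ∈ Icc 1 N, a k / c k := by
    rw [mul_sum]
    exact sum_le_sum fun i hi => by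
      rw [mul_one_div]
      exact div_le_div_of_nonneg_right (hA i hi) (hc i hi).le
  rw [one_div_mul_eq_div, ← sub_le_iff_le_add, le_div_iff₀ hS]
  linarith [htelescope N le_rfl, hr N]

end Recursion

theorem stmt3_general
    {E : Type*} [NormedAddCommGroup E] [InnerProductSpace ℝ E] [FiniteDimensional ℝ E]
    (Q : Set E) (hQ : Convex ℝ Q)
    (d : E → ℝ) (Dd : E → E)
    (hd_conv : ConvexOn ℝ Set.univ d) (hd_diff : ∀ x, HasGradientAt d (Dd x) x)
    (f : E → ℝ) (μ m δ δt : ℝ)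
    (hμ : 0 ≤ μ) (hm : 0 ≤ m) (hδ : 0 ≤ δ)
    (N : ℕ) (hN : 1 ≤ N)
    (x : ℕ → E)
    (L : ℕ → ℝ) (hL : ∀ k, 1 ≤ k → k ≤ N → 0 < L k)
    (fδ : ℕ → ℝ) (ψ : ℕ → E → ℝ)
    (hψ_conv : ∀ k < N, ConvexOn ℝ Q (ψ k))
    (hψ_strong : ∀ k < N, StrongRelConvexOn Q (breg d Dd) m (ψ k))
    (ha : ∀ k < N, ∀ u ∈ Q, μ * breg d Dd (x k) u ≤ f u - fδ k - ψ k u)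
    (hb : ∀ k ≤ N, f (x k) - δ ≤ fδ k ∧ fδ k ≤ f (x k))
    (hc : ∀ k < N,
      IsApproxMinOn Q (fun u => ψ k u + L (k + 1) * breg d Dd (x k) u) δt (x (k + 1)))
    (hd_ls : ∀ k < N,
      fδ (k + 1) ≤ fδ k + ψ k (x (k + 1)) + L (k + 1) * breg d Dd (x k) (x (k + 1)) + δ)
    (xs : E) (hxs : xs ∈ Q)
    (q : ℕ → ℝ) (hq : ∀ k, q k = if μ < L k then (L k - μ) / (L k + m) else 0)
    (jN : ℕ) (hjN : jN ∈ Finset.Icc 1 N)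
    (hjmin : ∀ k ∈ Finset.Icc 1 N, fδ jN ≤ fδ k) :
    f (x jN) - f xs ≤
      min ((L N + m) * ∏ i ∈ Finset.Icc 1 N, q i)
          (1 / ∑ i ∈ Finset.Icc 1 N, 1 / (L i + m)) * breg d Dd (x 0) xs
        + δt + 3 * δ := by
  have hV : ∀ y u, 0 ≤ breg d Dd y u := breg_nonneg hd_conv hd_diff
  obtain rfl : q = fun k => rateFactor μ m (L k) := funext hq
  have hstep : ∀ k < N, fδ (k + 1) - f xs + (L (k + 1) + m) * breg d Dd (x (k + 1)) xs
      ≤ rateFactor μ m (L (k + 1)) * ((L (k + 1) + m) * breg d Dd (x k) xs) + (δt + δ) := by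
    intro k hk
    have := (hc k hk).prox_three_point hQ hd_diff (hψ_conv k hk) (hψ_strong k hk) hxs
    have := sub_mul_le_rateFactor_mul (L (k + 1)) hμ hm (hV (x k) xs)
    linarith [ha k hk xs hxs, hd_ls k hk]
  have hLm : ∀ k ∈ Icc 1 N, 0 < L k + m := fun k hk =>
    add_pos_of_pos_of_nonneg (hL k (mem_Icc.1 hk).1 (mem_Icc.1 hk).2) hm
  have hgap : ∀ k ∈ Icc 1 N, fδ jN - f xs ≤ fδ k - f xs := fun k hk =>
    sub_le_sub_right (hjmin k hk) _
  have hr : ∀ k, 0 ≤ breg d Dd (x k) xs := fun k => hV (x k) xs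
  have hgeom := le_mul_prod_mul_add_of_step (a := fun k => fδ k - f xs) hN hr hLm
    (fun k => rateFactor_nonneg _ hμ hm) hstep hgap
  have hharm := le_inv_sum_inv_mul_add_of_step (a := fun k => fδ k - f xs) hN hr hLm
    (fun k => rateFactor_le_one _ hμ hm) hstep hgap
  rw [min_mul_of_nonneg _ _ (hV (x 0) xs)]
  linarith [le_min (sub_le_iff_le_add.2 hgeom) (sub_le_iff_le_add.2 hharm),
    (hb jN (mem_Icc.1 hjN).2).1]

/-- Theorem 3.1, objective bound: convergence rate in objective value of the
adaptive gradient method with an inexact `(δ, L, μ, m, V)`-model. -/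
theorem stmt3
    {E : Type*} [NormedAddCommGroup E] [InnerProductSpace ℝ E] [FiniteDimensional ℝ E]
    (Q : Set E) (hQ : Convex ℝ Q)
    (d : E → ℝ) (Dd : E → E)
    (hd_conv : ConvexOn ℝ Set.univ d) (hd_diff : ∀ x, HasGradientAt d (Dd x) x)
    (f : E → ℝ) (μ m δ δt : ℝ)
    (hμ : 0 ≤ μ) (hm : 0 ≤ m) (hδ : 0 ≤ δ) (hδt : 0 ≤ δt)
    (N : ℕ) (hN : 1 ≤ N)
    (x : ℕ → E) (hxQ : ∀ k ≤ N, x k ∈ Q)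
    (L : ℕ → ℝ) (hL : ∀ k, 1 ≤ k → k ≤ N → 0 < L k)
    (fδ : ℕ → ℝ) (ψ : ℕ → E → ℝ)
    (hψ_conv : ∀ k < N, ConvexOn ℝ Q (ψ k))
    (hψ0 : ∀ k < N, ψ k (x k) = 0)
    (hψ_strong : ∀ k < N, StrongRelConvexOn Q (breg d Dd) m (ψ k))
    (ha : ∀ k < N, ∀ u ∈ Q, μ * breg d Dd (x k) u ≤ f u - fδ k - ψ k u)
    (hb : ∀ k ≤ N, f (x k) - δ ≤ fδ k ∧ fδ k ≤ f (x k))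
    (hc : ∀ k < N,
      IsApproxMinOn Q (fun u => ψ k u + L (k + 1) * breg d Dd (x k) u) δt (x (k + 1)))
    (hd_ls : ∀ k < N,
      fδ (k + 1) ≤ fδ k + ψ k (x (k + 1)) + L (k + 1) * breg d Dd (x k) (x (k + 1)) + δ)
    (xs : E) (hxs : xs ∈ Q) (hmin : ∀ u ∈ Q, f xs ≤ f u)
    (q : ℕ → ℝ) (hq : ∀ k, q k = if μ < L k then (L k - μ) / (L k + m) else 0)
    (jN : ℕ) (hjN : jN ∈ Finset.Icc 1 N)
    (hjmin : ∀ k ∈ Finset.Icc 1 N, fδ jN ≤ fδ k) :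
    f (x jN) - f xs ≤
      min ((L N + m) * ∏ i ∈ Finset.Icc 1 N, q i)
          (1 / ∑ i ∈ Finset.Icc 1 N, 1 / (L i + m)) * breg d Dd (x 0) xs
        + δt + 3 * δ :=
  stmt3_general Q hQ d Dd hd_conv hd_diff f μ m δ δt hμ hm hδ N hN x L hL fδ ψ hψ_conv hψ_strong ha
    hb hc hd_ls xs hxs q hq jN hjN hjmin
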